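/- For every n ≥ 2, the number of permutations σ ∈ S_n with mmp^{(3≤max,∅,0,0)}(σ) = 0 equals 2·c(n,2), twice the number of permutations in S_n with exactly 2 cycles; that is, R_n^{(3≤max,∅,0,0)}(0) = 2·c(n,2). -/

import Mathlib

/-- `σ i` matches `MMP(k ≤ max, ∅, 0, 0)` in `σ`: none of the earlier entries
exceeds `σ i`, and, `σ m` being the maximum of the entries after position `i`,
at least `k` of the entries in positions `i+1, …, m` exceed `σ i`. -/
def kleMatch {n : ℕ} (k : ℕ) (σ : Equiv.Perm (Fin n)) (i : Fin n) : Prop :=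
  (∀ j, j < i → σ j < σ i) ∧
  ∃ m, i < m ∧ (∀ j, i < j → σ j ≤ σ m) ∧
    k ≤ (Finset.univ.filter (fun j => i < j ∧ j ≤ m ∧ σ i < σ j)).card

instance {n : ℕ} (k : ℕ) (σ : Equiv.Perm (Fin n)) (i : Fin n) :
    Decidable (kleMatch k σ i) := by
  unfold kleMatch; infer_instance

/-- `mmp^{(k ≤ max, ∅, 0, 0)}(σ)`. -/
def mmpKle {n : ℕ} (k : ℕ) (σ : Equiv.Perm (Fin n)) : ℕ :=
  (Finset.univ.filter (fun i => kleMatch k σ i)).card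

/-- `R_n^{(k ≤ max, ∅, 0, 0)}(x) = Σ_{σ ∈ S_n} x^{mmp^{(k ≤ max,∅,0,0)}(σ)}`. -/
noncomputable def RKle (k n : ℕ) : Polynomial ℤ :=
  ∑ σ : Equiv.Perm (Fin n), Polynomial.X ^ mmpKle k σ

/-- The number of cycles of `σ` (fixed points count as cycles). -/
def numCycles {n : ℕ} (σ : Equiv.Perm (Fin n)) : ℕ :=
  Multiset.card σ.cycleType + (Finset.univ.filter (fun x => σ x = x)).card

/-!
Index `0` matches the pattern as soon as any index does, so `σ` avoids it exactly when fewer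
than three of the entries in positions `1, …, σ⁻¹(max)` exceed `σ 0`. Inserting a new minimum
into `τ ∈ S_{n+1}` preserves this count unless the minimum becomes the first entry, in which case
the count is `σ⁻¹(max)`. Hence the number `A(m)` of avoiders satisfies
`A(n+2) = (n+1) A(n+1) + 2 n!` for `n ≥ 1`, while `c(n+2, 2) = (n+1) c(n+1, 2) + n!` is the
Stirling recurrence (read off from `Equiv.Perm.decomposeFin`), and `A(2) = 2 = 2 c(2, 2)`.
-/

open Equiv Equiv.Perm Finset

namespace Equiv.Perm

variable {α : Type*} [Fintype α] [DecidableEq α]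

theorem card_parts_partition (σ : Perm α) :
    Multiset.card σ.partition.parts =
      Multiset.card σ.cycleType + (Fintype.card α - #σ.support) := by
  simp [parts_partition]

theorem card_cycleType_swap_mul {σ : Perm α} {x : α} (hx : σ x ≠ x) (hxx : σ (σ x) ≠ x) :
    Multiset.card (swap x (σ x) * σ).cycleType = Multiset.card σ.cycleType := by
  set s := swap x (σ x)
  set c := σ.cycleOf x
  set r := σ * c⁻¹
  have hc : c.IsCycle := σ.isCycle_cycleOf hx
  have hcx : c x = σ x := σ.cycleOf_apply_self x
  have hcσx : c (σ x) = σ (σ x) := σ.cycleOf_apply_apply_self x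
  have hrc : r.Disjoint c := disjoint_mul_inv_of_mem_cycleFactorsFinset
    (cycleOf_mem_cycleFactorsFinset_iff.mpr (mem_support.mpr hx))
  have hσ : σ = r * c := by simp [r]
  have hsc : (s * c).IsCycle := by
    have := hc.swap_mul (hcx ▸ hx) (by rwa [hcx, hcσx])
    rwa [hcx] at this
  have hr : ∀ y, c y ≠ y → r y = y := fun y hy => (hrc y).resolve_right hy
  have hrs : r.Disjoint s := by
    intro y
    by_cases hy : y = x ∨ y = σ x
    · left
      rcases hy with rfl | rfl
      · exact hr _ (hcx ▸ hx)
      · exact hr _ (by rw [hcσx]; exact fun h => hx (σ.injective h))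
    · push Not at hy
      exact Or.inr (swap_apply_of_ne_of_ne hy.1 hy.2)
  clear_value s c r
  have hτ : s * σ = r * (s * c) := by
    rw [hσ, ← mul_assoc, ← mul_assoc, hrs.commute.eq]
  rw [hτ, (hrs.mul_right hrc).cycleType_mul, hσ, hrc.cycleType_mul, hsc.cycleType, hc.cycleType]
  simp

theorem card_parts_partition_swap_mul {σ : Perm α} {x : α} (hx : σ x ≠ x) :
    Multiset.card (swap x (σ x) * σ).partition.parts = Multiset.card σ.partition.parts + 1 := by
  rw [card_parts_partition, card_parts_partition]
  have hle := σ.support.card_le_univ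
  rcases eq_or_ne (σ (σ x)) x with hxx | hxx
  · -- the cycle of `x` is the transposition `(x σx)`, which the product removes
    set s := swap x (σ x)
    set τ := s * σ
    have hσ : σ = s * τ := (swap_mul_self_mul _ _ _).symm
    have hdisj : s.Disjoint τ := by
      intro y
      by_cases hy : y = x ∨ y = σ x
      · right
        rcases hy with rfl | rfl <;> simp [τ, s, hxx]
      · push Not at hy
        exact Or.inl (swap_apply_of_ne_of_ne hy.1 hy.2)
    have hct : Multiset.card σ.cycleType = Multiset.card τ.cycleType + 1 := by
      rw [hσ, hdisj.cycleType_mul, (isCycle_swap (Ne.symm hx)).cycleType]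
      simp [add_comm]
    have hsupp : #σ.support = #τ.support + 2 := by
      rw [hσ, hdisj.card_support_mul, card_support_swap (Ne.symm hx), add_comm]
    omega
  · rw [card_cycleType_swap_mul hx hxx, support_swap_mul_eq σ x hxx,
      card_sdiff_of_subset (singleton_subset_iff.mpr (mem_support.mpr hx)), card_singleton]
    have := card_pos.mpr ⟨x, mem_support.mpr hx⟩
    omega

theorem decomposeFin_symm_zero {n : ℕ} (e : Perm (Fin n)) :
    decomposeFin.symm (0, e) = e.extendDomain (finSuccAboveEquiv 0) := by
  refine Equiv.ext fun y => ?_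
  refine Fin.cases ?_ (fun i => ?_) y
  · rw [decomposeFin_symm_apply_zero, extendDomain_apply_not_subtype _ _ (by simp)]
  · simpa [finSuccAboveEquiv_apply] using (extendDomain_apply_image e (finSuccAboveEquiv 0) i).symm

theorem card_filter_apply_eq (a b : α) :
    #{σ : Perm α | σ a = b} = (Fintype.card α - 1).factorial := by
  calc #{σ : Perm α | σ a = b} = #{σ : Perm α | σ a = a} :=
        card_equiv (Equiv.mulLeft (swap a b)) fun σ => by simp [swap_apply_eq_iff]
    _ = Fintype.card (Perm {x // x ≠ a}) := by
        rw [← Fintype.card_subtype]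
        exact Fintype.card_congr ((Perm.subtypeEquivSubtypePerm (· ≠ a)).trans
          (subtypeEquivRight fun σ => by simp)).symm
    _ = (Fintype.card α - 1).factorial := by simp [Fintype.card_perm, Fintype.card_subtype_compl]

end Equiv.Perm

theorem numCycles_eq_card_parts {n : ℕ} (σ : Perm (Fin n)) :
    numCycles σ = Multiset.card σ.partition.parts := by
  have hfix := card_filter_add_card_filter_not (s := univ) (fun x => σ x = x)
  rw [numCycles, card_parts_partition, Fintype.card_fin]
  simp only [card_univ, Fintype.card_fin] at hfix
  have : #σ.support = #{x | ¬σ x = x} := rfl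
  omega

theorem numCycles_decomposeFin_symm {n : ℕ} (p : Fin (n + 1)) (e : Perm (Fin n)) :
    numCycles (decomposeFin.symm (p, e)) = numCycles e + if p = 0 then 1 else 0 := by
  have h0 : numCycles (decomposeFin.symm (0, e)) = numCycles e + 1 := by
    simp only [numCycles_eq_card_parts, card_parts_partition, decomposeFin_symm_zero,
      cycleType_extendDomain, card_support_extend_domain, Fintype.card_fin]
    have := e.support.card_le_univ
    rw [Fintype.card_fin] at this
    omega
  split_ifs with hp
  · rw [hp, h0]
  · set σ := decomposeFin.symm (p, e)
    have hσ0 : σ 0 = p := decomposeFin_symm_apply_zero p e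
    have hswap : swap 0 (σ 0) * σ = decomposeFin.symm (0, e) := by
      refine Equiv.ext fun y => ?_
      refine Fin.cases ?_ (fun i => ?_) y <;> simp [σ, swap_apply_self]
    have := card_parts_partition_swap_mul (σ := σ) (x := 0) (by rwa [hσ0])
    rw [hswap, ← numCycles_eq_card_parts, ← numCycles_eq_card_parts, h0] at this
    omega

theorem card_numCycles_eq (n k : ℕ) :
    #{σ : Perm (Fin n) | numCycles σ = k} = Nat.stirlingFirst n k := by
  induction n generalizing k with
  | zero =>
    have : ∀ σ : Perm (Fin 0), numCycles σ = 0 := fun σ => by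
      simp [Subsingleton.elim σ 1, numCycles]
    cases k <;> simp [this]
  | succ n ih =>
    rw [card_filter, ← (decomposeFin.symm).sum_comp, Fintype.sum_prod_type, Fin.sum_univ_succ]
    simp only [numCycles_decomposeFin_symm, Fin.succ_ne_zero, if_true, if_false, add_zero,
      ← card_filter, ih, sum_const, card_univ, Fintype.card_fin, smul_eq_mul]
    cases k with
    | zero => cases n <;> simp
    | succ k => simp [Nat.stirlingFirst_succ_succ, ih, add_comm]

section PatternAvoidance

variable {n k : ℕ}

def posMax (σ : Perm (Fin (n + 1))) : Fin (n + 1) := σ⁻¹ (Fin.last n)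

theorem posMax_eq_iff {σ : Perm (Fin (n + 1))} {m : Fin (n + 1)} :
    posMax σ = m ↔ σ m = Fin.last n := by
  rw [posMax, inv_eq_iff_eq, eq_comm]

@[simp] theorem apply_posMax (σ : Perm (Fin (n + 1))) : σ (posMax σ) = Fin.last n :=
  posMax_eq_iff.mp rfl

theorem posMax_eq_of_forall_le {σ : Perm (Fin (n + 1))} {m : Fin (n + 1)}
    (h : ∀ j, σ j ≤ σ m) : posMax σ = m :=
  posMax_eq_iff.mpr (le_antisymm (Fin.le_last _) (by simpa using h (posMax σ)))

def numAboveHeadUpToMax (σ : Perm (Fin (n + 1))) : ℕ :=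
  #{j | 0 < j ∧ j ≤ posMax σ ∧ σ 0 < σ j}

theorem le_numAboveHeadUpToMax_of_kleMatch (hk : k ≠ 0) {σ : Perm (Fin (n + 1))}
    {i : Fin (n + 1)} (h : kleMatch k σ i) : k ≤ numAboveHeadUpToMax σ := by
  obtain ⟨hleft, m, him, hmax, hcard⟩ := h
  obtain ⟨j₀, hj₀⟩ : ({j | i < j ∧ j ≤ m ∧ σ i < σ j} : Finset _).Nonempty :=
    card_pos.mp (by omega)
  simp only [mem_filter, mem_univ, true_and] at hj₀
  have him : σ i ≤ σ m := (hj₀.2.2.trans_le (hmax j₀ hj₀.1)).le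
  have h0i : σ 0 ≤ σ i := by
    rcases eq_or_ne i 0 with rfl | hi
    · exact le_rfl
    · exact (hleft 0 (Fin.pos_iff_ne_zero.mpr hi)).le
  have hm : posMax σ = m := posMax_eq_of_forall_le fun j => by
    rcases lt_trichotomy j i with hj | rfl | hj
    · exact ((hleft j hj).trans_le him).le
    · exact him
    · exact hmax j hj
  refine hcard.trans (card_le_card fun j hj => ?_)
  simp only [mem_filter, mem_univ, true_and] at hj ⊢
  exact ⟨(Fin.zero_le i).trans_lt hj.1, hm ▸ hj.2.1, h0i.trans_lt hj.2.2⟩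

theorem kleMatch_zero_of_le_numAboveHeadUpToMax (hk : k ≠ 0) {σ : Perm (Fin (n + 1))}
    (h : k ≤ numAboveHeadUpToMax σ) : kleMatch k σ 0 := by
  obtain ⟨j₀, hj₀⟩ : ({j | 0 < j ∧ j ≤ posMax σ ∧ σ 0 < σ j} : Finset _).Nonempty :=
    card_pos.mp (by rw [numAboveHeadUpToMax] at h; omega)
  simp only [mem_filter, mem_univ, true_and] at hj₀
  exact ⟨fun j hj => absurd hj (Fin.not_lt_zero j), posMax σ, hj₀.1.trans_le hj₀.2.1,
    fun j _ => by simp [Fin.le_last], h⟩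

theorem mmpKle_eq_zero_iff (hk : k ≠ 0) (σ : Perm (Fin (n + 1))) :
    mmpKle k σ = 0 ↔ numAboveHeadUpToMax σ < k := by
  rw [mmpKle, card_eq_zero, filter_eq_empty_iff]
  refine ⟨fun h => ?_, fun h i _ hi => (le_numAboveHeadUpToMax_of_kleMatch hk hi).not_gt h⟩
  by_contra hc
  exact h (mem_univ 0) (kleMatch_zero_of_le_numAboveHeadUpToMax hk (not_lt.mp hc))

theorem mmpKle_eq_zero_of_lt (hnk : n < k) (σ : Perm (Fin (n + 1))) : mmpKle k σ = 0 := by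
  refine (mmpKle_eq_zero_iff (by omega) σ).mpr (lt_of_le_of_lt ?_ hnk)
  calc numAboveHeadUpToMax σ ≤ #(univ.erase (0 : Fin (n + 1))) :=
        card_le_card fun j hj => mem_erase.mpr ⟨(mem_filter.mp hj).2.1.ne', mem_univ j⟩
    _ = n := by simp

theorem RKle_eval_zero (k n : ℕ) :
    (RKle k n).eval 0 = #{σ : Perm (Fin n) | mmpKle k σ = 0} := by
  simp [RKle, Polynomial.eval_finsetSum, zero_pow_eq]

def insMin (j : Fin (n + 1)) (τ : Perm (Fin n)) : Perm (Fin (n + 1)) :=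
  (finSuccEquiv' j).trans ((optionCongr τ).trans (finSuccEquiv' 0).symm)

@[simp] theorem insMin_apply_self (j : Fin (n + 1)) (τ : Perm (Fin n)) : insMin j τ j = 0 := by
  simp [insMin]

@[simp] theorem insMin_apply_succAbove (j : Fin (n + 1)) (τ : Perm (Fin n)) (i : Fin n) :
    insMin j τ (j.succAbove i) = (τ i).succ := by
  simp [insMin, optionCongr, Fin.zero_succAbove]

theorem insMin_eq_zero_iff {j : Fin (n + 1)} {τ : Perm (Fin n)} {x : Fin (n + 1)} :
    insMin j τ x = 0 ↔ x = j := by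
  refine ⟨fun h => ?_, fun h => h ▸ insMin_apply_self j τ⟩
  by_contra hx
  obtain ⟨i, rfl⟩ := Fin.exists_succAbove_eq hx
  simp at h

theorem insMin_injective :
    Function.Injective fun x : Fin (n + 1) × Perm (Fin n) => insMin x.1 x.2 := by
  rintro ⟨j, τ⟩ ⟨j', τ'⟩ h
  simp only at h
  obtain rfl : j = j' := insMin_eq_zero_iff.mp (h ▸ insMin_apply_self j τ)
  obtain rfl : τ = τ' := Equiv.ext fun i => Fin.succ_injective _ <| by
    rw [← insMin_apply_succAbove, ← insMin_apply_succAbove, h]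
  rfl

noncomputable def insMinEquiv : Fin (n + 1) × Perm (Fin n) ≃ Perm (Fin (n + 1)) :=
  .ofBijective _ <| (Fintype.bijective_iff_injective_and_card _).mpr
    ⟨insMin_injective, by simp [Fintype.card_perm, Nat.factorial_succ]⟩

@[simp] theorem insMinEquiv_apply (x : Fin (n + 1) × Perm (Fin n)) :
    insMinEquiv x = insMin x.1 x.2 := rfl

theorem posMax_insMin (j : Fin (n + 2)) (τ : Perm (Fin (n + 1))) :
    posMax (insMin j τ) = j.succAbove (posMax τ) :=
  posMax_eq_iff.mpr (by simp)

theorem numAboveHeadUpToMax_insMin_of_ne_zero {j : Fin (n + 2)} (hj : j ≠ 0)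
    (τ : Perm (Fin (n + 1))) : numAboveHeadUpToMax (insMin j τ) = numAboveHeadUpToMax τ := by
  have hsucc0 : j.succAbove 0 = 0 := Fin.succAbove_ne_zero_zero hj
  have hpos : ∀ i, 0 < j.succAbove i ↔ 0 < i := fun i => by
    rw [← hsucc0, Fin.succAbove_lt_succAbove_iff]
  have hhead : insMin j τ 0 = (τ 0).succ := by rw [← hsucc0, insMin_apply_succAbove]
  rw [numAboveHeadUpToMax, numAboveHeadUpToMax, ← card_map (Fin.succAboveEmb j)]
  congr 1
  ext y
  rcases Fin.eq_self_or_eq_succAbove j y with rfl | ⟨i, rfl⟩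
  · simp [Fin.succAbove_ne]
  · simp [hpos, hhead, posMax_insMin, Fin.succAbove_le_succAbove_iff]

theorem numAboveHeadUpToMax_insMin_zero (τ : Perm (Fin (n + 1))) :
    numAboveHeadUpToMax (insMin 0 τ) = posMax τ + 1 := by
  have : ({j | 0 < j ∧ j ≤ posMax (insMin 0 τ) ∧ insMin 0 τ 0 < insMin 0 τ j} : Finset _) =
      Ioc 0 (posMax τ).succ := by
    ext y
    simp +contextual [posMax_insMin, Fin.pos_iff_ne_zero, insMin_eq_zero_iff]
  rw [numAboveHeadUpToMax, this, Fin.card_Ioc]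
  simp

theorem card_mmpKle_eq_zero_succ (hk : k ≠ 0) :
    #{σ : Perm (Fin (n + 2)) | mmpKle k σ = 0} =
      (n + 1) * #{σ : Perm (Fin (n + 1)) | mmpKle k σ = 0} +
        #{τ : Perm (Fin (n + 1)) | (posMax τ : ℕ) + 1 < k} := by
  rw [card_filter, ← insMinEquiv.sum_comp, Fintype.sum_prod_type, Fin.sum_univ_succ]
  simp only [insMinEquiv_apply, mmpKle_eq_zero_iff hk, numAboveHeadUpToMax_insMin_zero,
    numAboveHeadUpToMax_insMin_of_ne_zero (Fin.succ_ne_zero _), ← card_filter, sum_const,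
    card_univ, Fintype.card_fin, smul_eq_mul]
  ring

end PatternAvoidance

theorem card_posMax_add_one_lt_three (n : ℕ) :
    #{τ : Perm (Fin (n + 2)) | (posMax τ : ℕ) + 1 < 3} = 2 * (n + 1).factorial := by
  have hcond : ∀ τ : Perm (Fin (n + 2)),
      (posMax τ : ℕ) + 1 < 3 ↔ τ 0 = Fin.last (n + 1) ∨ τ 1 = Fin.last (n + 1) := fun τ => by
    rw [← posMax_eq_iff, ← posMax_eq_iff, Fin.ext_iff, Fin.ext_iff]
    simp only [Fin.val_zero, Fin.val_one]
    omega
  rw [filter_congr fun τ _ => hcond τ, filter_or, card_union_of_disjoint, card_filter_apply_eq,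
    card_filter_apply_eq, Fintype.card_fin, two_mul]
  · rfl
  · exact disjoint_filter.mpr fun τ _ h0 h1 => zero_ne_one (τ.injective (h0.trans h1.symm))

theorem card_mmpKle_three_eq_zero (n : ℕ) :
    #{σ : Perm (Fin (n + 2)) | mmpKle 3 σ = 0} = 2 * Nat.stirlingFirst (n + 2) 2 := by
  induction n with
  | zero =>
    rw [filter_true_of_mem fun σ _ => mmpKle_eq_zero_of_lt (by norm_num) σ]
    simp [Fintype.card_perm, Nat.stirlingFirst_self]
  | succ n ih =>
    rw [card_mmpKle_eq_zero_succ (by norm_num), ih, card_posMax_add_one_lt_three,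
      Nat.stirlingFirst_succ_succ (n + 2) 1, Nat.stirlingFirst_one_right]
    ring

theorem stmt_13 (n : ℕ) (hn : 2 ≤ n) :
    (Finset.univ.filter (fun σ : Equiv.Perm (Fin n) => mmpKle 3 σ = 0)).card =
      2 * (Finset.univ.filter (fun σ : Equiv.Perm (Fin n) => numCycles σ = 2)).card ∧
    (RKle 3 n).eval 0 =
      (2 * (Finset.univ.filter (fun σ : Equiv.Perm (Fin n) => numCycles σ = 2)).card : ℤ) := by
  obtain ⟨m, rfl⟩ := Nat.exists_eq_add_of_le' hn
  have hcount : #{σ : Perm (Fin (m + 2)) | mmpKle 3 σ = 0} =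
      2 * #{σ : Perm (Fin (m + 2)) | numCycles σ = 2} := by
    rw [card_mmpKle_three_eq_zero, card_numCycles_eq]
  refine ⟨hcount, ?_⟩
  rw [RKle_eval_zero, hcount]
  push_cast
  rfl
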